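/- Let E be a real normed space and let ξ₀, ξ₁ be convex Katětov functions on E. Set r₀ = sup_{a∈E} |ξ₀(a) − ξ₁(a)| and r₁ = inf_{a∈E} (ξ₀(a) + ξ₁(a)). Then r₀ ≤ r₁, and for every real r with r₀ ≤ r ≤ r₁ there exists a seminorm N on E × ℝ × ℝ (the triple (a, α₀, α₁) encoding the vector α₀x₀ + α₁x₁ − a of E ⊕ ℝx₀ ⊕ ℝx₁) such that N(a, α, 0) = N^{ξ₀}(a, α) and N(a, 0, α) = N^{ξ₁}(a, α) for all a ∈ E, α ∈ ℝ, and N(0, 1, −1) = r (i.e., ‖x₀ − x₁‖ = r). -/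

import Mathlib

/-!
`N^ξ` is the norm of `E ⊕ ℝx` for which `‖x - a‖ = ξ a`. Its triangle inequality splits by the
signs of the `x`-components: a summand in `E` costs at most its norm because `ξ` is 1-Lipschitz,
cancelling `x`-components are handled by `‖a - b‖ ≤ ξ a + ξ b`, equal signs by convexity of `ξ`,
and opposite signs reduce to the first two cases by splitting off the part of the larger summand
that cancels the smaller one.

The amalgam is the quotient of the seminorm `N^{ξ₀} u₀ + N^{ξ₁} u₁ + r |t|` along
`(u₀, u₁, t) ↦ u₀ + u₁ + t (x₀ - x₁)`. It still restricts to `N^{ξ₀}`, because `|ξ₀ - ξ₁| ≤ r`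
means that a detour through `x₁` never beats going through `x₀` directly (symmetrically for `ξ₁`),
and `‖x₀ - x₁‖` is not shortened below `r` because `ξ₀ + ξ₁ ≥ r`.
-/

/-- A function `ξ` on a metric space is *Katětov* if `|ξ x - ξ y| ≤ d(x,y)` and
`d(x,y) ≤ ξ x + ξ y` for all `x, y`. -/
def IsKatetov {X : Type*} [MetricSpace X] (ξ : X → ℝ) : Prop :=
  ∀ x y : X, |ξ x - ξ y| ≤ dist x y ∧ dist x y ≤ ξ x + ξ y

/-- A seminorm (as a bare function): absolutely homogeneous and subadditive. -/
def IsSeminorm {V : Type*} [AddCommGroup V] [Module ℝ V] (N : V → ℝ) : Prop :=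
  (∀ (t : ℝ) (v : V), N (t • v) = |t| * N v) ∧ ∀ v w : V, N (v + w) ≤ N v + N w

/-- The function `N^ξ` on `E × ℝ`, where `(a, α)` encodes the vector `αx - a` of `E ⊕ ℝx`:
`N^ξ (a, α) = |α| ξ(a/α)` for `α ≠ 0`, and `N^ξ (a, 0) = ‖a‖`. -/
noncomputable def katetovSeminorm {E : Type*} [NormedAddCommGroup E] [NormedSpace ℝ E]
    (ξ : E → ℝ) (v : E × ℝ) : ℝ :=
  if v.2 = 0 then ‖v.1‖ else |v.2| * ξ (v.2⁻¹ • v.1)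

namespace IsKatetov

variable {X : Type*} [MetricSpace X] {ξ ξ₀ ξ₁ : X → ℝ}

lemma nonneg (h : IsKatetov ξ) (x : X) : 0 ≤ ξ x := by
  simpa using (h x x).2

lemma le_add_dist (h : IsKatetov ξ) (x y : X) : ξ x ≤ ξ y + dist x y := by
  linarith [(abs_le.mp (h x y).1).2]

lemma abs_sub_le_add (h₀ : IsKatetov ξ₀) (h₁ : IsKatetov ξ₁) (x y : X) :
    |ξ₀ x - ξ₁ x| ≤ ξ₀ y + ξ₁ y := by
  have := h₀.le_add_dist x y
  have := h₁.le_add_dist x y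
  have := (h₀ x y).2
  have := (h₁ x y).2
  rw [abs_le]
  constructor <;> linarith

lemma abs_sub_le_iSup (h₀ : IsKatetov ξ₀) (h₁ : IsKatetov ξ₁) (x : X) :
    |ξ₀ x - ξ₁ x| ≤ ⨆ a, |ξ₀ a - ξ₁ a| :=
  le_ciSup ⟨ξ₀ x + ξ₁ x, by rintro _ ⟨a, rfl⟩; exact abs_sub_le_add h₀ h₁ a x⟩ x

lemma iInf_add_le (h₀ : IsKatetov ξ₀) (h₁ : IsKatetov ξ₁) (x : X) :
    ⨅ a, (ξ₀ a + ξ₁ a) ≤ ξ₀ x + ξ₁ x :=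
  ciInf_le ⟨0, by rintro _ ⟨a, rfl⟩; exact add_nonneg (h₀.nonneg a) (h₁.nonneg a)⟩ x

lemma iSup_abs_sub_le_iInf_add [Nonempty X] (h₀ : IsKatetov ξ₀) (h₁ : IsKatetov ξ₁) :
    ⨆ a, |ξ₀ a - ξ₁ a| ≤ ⨅ a, (ξ₀ a + ξ₁ a) :=
  ciSup_le fun x => le_ciInf fun y => abs_sub_le_add h₀ h₁ x y

end IsKatetov

section SubadditiveBySign

variable {V : Type*} [AddCommGroup V] [Module ℝ V] (φ : V →ₗ[ℝ] ℝ) {N : V → ℝ}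

lemma map_add_le_add_of_mul_nonpos (smul : ∀ (t : ℝ) (v : V), N (t • v) = |t| * N v)
    (add_le_of_eq_zero : ∀ v w, φ w = 0 → N (v + w) ≤ N v + N w)
    (add_le_of_add_eq_zero : ∀ v w, φ v + φ w = 0 → N (v + w) ≤ N v + N w)
    {v w : V} (hsign : φ v * φ w ≤ 0) (habs : |φ w| ≤ |φ v|) :
    N (v + w) ≤ N v + N w := by
  -- split `v = s • v + (1 - s) • v`, where `(1 - s) • v` cancels the `φ`-component of `w`
  obtain ⟨s, hs₀, hs₁, hcancel⟩ : ∃ s : ℝ, 0 ≤ s ∧ s ≤ 1 ∧ φ ((1 - s) • v) + φ w = 0 := by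
    rcases eq_or_ne (φ v) 0 with hv | hv
    · rw [hv, abs_zero, abs_nonpos_iff] at habs
      exact ⟨1, zero_le_one, le_rfl, by simp [habs]⟩
    refine ⟨1 + φ w / φ v, ?_, ?_, by simp only [map_smul, smul_eq_mul]; field_simp; ring⟩
    · have := neg_abs_le (φ w / φ v)
      have : |φ w / φ v| ≤ 1 := by rw [abs_div]; exact div_le_one_of_le₀ habs (abs_nonneg _)
      linarith
    · have : φ w / φ v ≤ 0 := by
        rw [show φ w / φ v = φ v * φ w / φ v ^ 2 by field_simp]
        exact div_nonpos_of_nonpos_of_nonneg hsign (sq_nonneg _)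
      linarith
  have hzero : φ ((1 - s) • v + w) = 0 := by rwa [map_add]
  calc N (v + w) = N (s • v + ((1 - s) • v + w)) := by congr 1; module
    _ ≤ N (s • v) + N ((1 - s) • v + w) := by
        simpa using add_le_of_eq_zero (s • v) _ hzero
    _ ≤ N (s • v) + (N ((1 - s) • v) + N w) := by gcongr; exact add_le_of_add_eq_zero _ _ hcancel
    _ = N v + N w := by
        rw [smul, smul, abs_of_nonneg hs₀, abs_of_nonneg (by linarith)]; ring

lemma map_add_le_add_of_sign_cases (smul : ∀ (t : ℝ) (v : V), N (t • v) = |t| * N v)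
    (add_le_of_eq_zero : ∀ v w, φ w = 0 → N (v + w) ≤ N v + N w)
    (add_le_of_add_eq_zero : ∀ v w, φ v + φ w = 0 → N (v + w) ≤ N v + N w)
    (add_le_of_pos : ∀ v w, 0 < φ v → 0 < φ w → N (v + w) ≤ N v + N w) (v w : V) :
    N (v + w) ≤ N v + N w := by
  rcases le_or_gt (φ v * φ w) 0 with hsign | hsign
  · rcases le_total |φ w| |φ v| with habs | habs
    · exact map_add_le_add_of_mul_nonpos φ smul add_le_of_eq_zero add_le_of_add_eq_zero hsign habs
    · rw [add_comm v, add_comm (N v)]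
      exact map_add_le_add_of_mul_nonpos φ smul add_le_of_eq_zero add_le_of_add_eq_zero
        (by rwa [mul_comm]) habs
  · rcases pos_and_pos_or_neg_and_neg_of_mul_pos hsign with ⟨hv, hw⟩ | ⟨hv, hw⟩
    · exact add_le_of_pos v w hv hw
    · have hneg : ∀ u, N (-u) = N u := fun u => by simpa using smul (-1) u
      rw [← hneg (v + w), neg_add, ← hneg v, ← hneg w]
      exact add_le_of_pos (-v) (-w) (by simpa using hv) (by simpa using hw)

end SubadditiveBySign

lemma abs_mul_norm_inv_smul {E : Type*} [NormedAddCommGroup E] [NormedSpace ℝ E] {α : ℝ}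
    (hα : α ≠ 0) (b : E) : |α| * ‖α⁻¹ • b‖ = ‖b‖ := by
  rw [← Real.norm_eq_abs, ← norm_smul, smul_inv_smul₀ hα]

section KatetovSeminorm

variable {E : Type*} [NormedAddCommGroup E] [NormedSpace ℝ E] {ξ : E → ℝ}

@[simp]
lemma katetovSeminorm_mk_zero (a : E) : katetovSeminorm ξ (a, 0) = ‖a‖ := by
  simp [katetovSeminorm]

lemma katetovSeminorm_mk_of_ne_zero (a : E) {α : ℝ} (hα : α ≠ 0) :
    katetovSeminorm ξ (a, α) = |α| * ξ (α⁻¹ • a) :=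
  if_neg hα

lemma katetovSeminorm_smul (t : ℝ) (v : E × ℝ) :
    katetovSeminorm ξ (t • v) = |t| * katetovSeminorm ξ v := by
  obtain ⟨a, α⟩ := v
  rcases eq_or_ne t 0 with rfl | ht
  · rw [zero_smul, abs_zero, zero_mul, ← Prod.mk_zero_zero, katetovSeminorm_mk_zero, norm_zero]
  rcases eq_or_ne α 0 with rfl | hα
  · simp [norm_smul]
  rw [Prod.smul_mk, smul_eq_mul, katetovSeminorm_mk_of_ne_zero _ hα,
    katetovSeminorm_mk_of_ne_zero _ (mul_ne_zero ht hα), abs_mul, mul_inv_rev, mul_smul,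
    inv_smul_smul₀ ht, mul_assoc]

lemma katetovSeminorm_add_le_of_snd_eq_zero (hK : IsKatetov ξ) (v w : E × ℝ) (hw : w.2 = 0) :
    katetovSeminorm ξ (v + w) ≤ katetovSeminorm ξ v + katetovSeminorm ξ w := by
  obtain ⟨a, α⟩ := v
  obtain ⟨b, _⟩ := w
  subst hw
  rw [Prod.mk_add_mk, add_zero, katetovSeminorm_mk_zero]
  rcases eq_or_ne α 0 with rfl | hα
  · simpa using norm_add_le a b
  rw [katetovSeminorm_mk_of_ne_zero _ hα, katetovSeminorm_mk_of_ne_zero _ hα]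
  calc |α| * ξ (α⁻¹ • (a + b)) ≤ |α| * (ξ (α⁻¹ • a) + ‖α⁻¹ • b‖) := by
        gcongr
        simpa [dist_eq_norm, smul_add] using hK.le_add_dist (α⁻¹ • (a + b)) (α⁻¹ • a)
    _ = |α| * ξ (α⁻¹ • a) + ‖b‖ := by rw [mul_add, abs_mul_norm_inv_smul hα]

lemma katetovSeminorm_add_le_of_snd_add_eq_zero (hK : IsKatetov ξ) (v w : E × ℝ)
    (hvw : v.2 + w.2 = 0) :
    katetovSeminorm ξ (v + w) ≤ katetovSeminorm ξ v + katetovSeminorm ξ w := by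
  obtain ⟨a, α⟩ := v
  obtain ⟨b, β⟩ := w
  obtain rfl : β = -α := by simp only at hvw; linarith
  rw [Prod.mk_add_mk, add_neg_cancel, katetovSeminorm_mk_zero]
  rcases eq_or_ne α 0 with rfl | hα
  · simpa using norm_add_le a b
  rw [katetovSeminorm_mk_of_ne_zero _ hα, katetovSeminorm_mk_of_ne_zero _ (neg_ne_zero.2 hα),
    abs_neg, ← mul_add, ← abs_mul_norm_inv_smul hα]
  gcongr
  simpa [dist_eq_norm, smul_add] using (hK (α⁻¹ • a) ((-α)⁻¹ • b)).2

lemma katetovSeminorm_add_le_of_pos (hC : ConvexOn ℝ Set.univ ξ) (v w : E × ℝ) (hv : 0 < v.2)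
    (hw : 0 < w.2) :
    katetovSeminorm ξ (v + w) ≤ katetovSeminorm ξ v + katetovSeminorm ξ w := by
  obtain ⟨a, α⟩ := v
  obtain ⟨b, β⟩ := w
  simp only at hv hw
  have hαβ : 0 < α + β := add_pos hv hw
  rw [Prod.mk_add_mk, katetovSeminorm_mk_of_ne_zero _ hv.ne', katetovSeminorm_mk_of_ne_zero _ hw.ne',
    katetovSeminorm_mk_of_ne_zero _ hαβ.ne', abs_of_pos hv, abs_of_pos hw, abs_of_pos hαβ]
  have hconv := hC.2 (Set.mem_univ (α⁻¹ • a)) (Set.mem_univ (β⁻¹ • b)) (div_pos hv hαβ).le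
    (div_pos hw hαβ).le (by field_simp)
  have hmid : (α / (α + β)) • α⁻¹ • a + (β / (α + β)) • β⁻¹ • b = (α + β)⁻¹ • (a + b) := by
    match_scalars <;> field_simp
  rw [hmid, smul_eq_mul, smul_eq_mul] at hconv
  calc (α + β) * ξ ((α + β)⁻¹ • (a + b))
      ≤ (α + β) * (α / (α + β) * ξ (α⁻¹ • a) + β / (α + β) * ξ (β⁻¹ • b)) := by gcongr
    _ = α * ξ (α⁻¹ • a) + β * ξ (β⁻¹ • b) := by field_simp

noncomputable def convexKatetovSeminorm (hK : IsKatetov ξ) (hC : ConvexOn ℝ Set.univ ξ) :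
    Seminorm ℝ (E × ℝ) :=
  Seminorm.of (katetovSeminorm ξ)
    (map_add_le_add_of_sign_cases (LinearMap.snd ℝ E ℝ) katetovSeminorm_smul
      (katetovSeminorm_add_le_of_snd_eq_zero hK) (katetovSeminorm_add_le_of_snd_add_eq_zero hK)
      (katetovSeminorm_add_le_of_pos hC))
    (fun t v => by rw [Real.norm_eq_abs]; exact katetovSeminorm_smul t v)

lemma katetovSeminorm_le_add_mul_abs {ξ₀ ξ₁ : E → ℝ} {r : ℝ} (h : ∀ x, ξ₀ x ≤ ξ₁ x + r)
    (v : E × ℝ) : katetovSeminorm ξ₀ v ≤ katetovSeminorm ξ₁ v + r * |v.2| := by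
  obtain ⟨a, α⟩ := v
  rcases eq_or_ne α 0 with rfl | hα
  · simp
  rw [katetovSeminorm_mk_of_ne_zero _ hα, katetovSeminorm_mk_of_ne_zero _ hα, mul_comm r,
    ← mul_add]
  gcongr
  exact h _

lemma mul_abs_le_katetovSeminorm_add {ξ₀ ξ₁ : E → ℝ} {r : ℝ} (h : ∀ x, r ≤ ξ₀ x + ξ₁ x)
    (v : E × ℝ) : r * |v.2| ≤ katetovSeminorm ξ₀ v + katetovSeminorm ξ₁ v := by
  obtain ⟨a, α⟩ := v
  rcases eq_or_ne α 0 with rfl | hα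
  · simp only [abs_zero, mul_zero, katetovSeminorm_mk_zero]
    positivity
  rw [katetovSeminorm_mk_of_ne_zero _ hα, katetovSeminorm_mk_of_ne_zero _ hα, mul_comm r,
    ← mul_add]
  gcongr
  exact h _

end KatetovSeminorm

namespace Seminorm

variable {𝕜 W V : Type*} [NormedField 𝕜] [AddCommGroup W] [Module 𝕜 W] [AddCommGroup V]
  [Module 𝕜 V]

/-- The quotient seminorm of `p` along the surjection `T`. -/
noncomputable def map (p : Seminorm 𝕜 W) (T : W →ₗ[𝕜] V) (hT : Function.Surjective T) :
    Seminorm 𝕜 V :=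
  haveI : ∀ v, Nonempty {w // T w = v} := fun v => nonempty_subtype.2 (hT v)
  have hbdd : ∀ v, BddBelow (Set.range fun w : {w // T w = v} => p w) := fun v =>
    ⟨0, by rintro _ ⟨w, rfl⟩; exact apply_nonneg p w.1⟩
  Seminorm.ofSMulLE (fun v => ⨅ w : {w // T w = v}, p w)
    (le_antisymm (ciInf_le_of_le (hbdd 0) ⟨0, map_zero T⟩ (map_zero p).le)
      (le_ciInf fun w => apply_nonneg p w.1))
    (fun v₁ v₂ => le_ciInf_add_ciInf fun w₁ w₂ =>
      ciInf_le_of_le (hbdd _) ⟨w₁ + w₂, by rw [map_add, w₁.2, w₂.2]⟩ (map_add_le_add p w₁.1 w₂.1))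
    (fun c v => by
      rw [Real.mul_iInf_of_nonneg (norm_nonneg c)]
      exact le_ciInf fun w => ciInf_le_of_le (hbdd _) ⟨c • w, by rw [map_smul, w.2]⟩
        (map_smul_eq_mul p c w.1).le)

variable {p : Seminorm 𝕜 W} {T : W →ₗ[𝕜] V} {hT : Function.Surjective T}

lemma map_apply_le {v : V} {w : W} (hw : T w = v) : p.map T hT v ≤ p w :=
  ciInf_le_of_le ⟨0, by rintro _ ⟨w, rfl⟩; exact apply_nonneg p w.1⟩ ⟨w, hw⟩ le_rfl

lemma le_map_apply {v : V} {c : ℝ} (h : ∀ w, T w = v → c ≤ p w) : c ≤ p.map T hT v :=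
  haveI : Nonempty {w // T w = v} := nonempty_subtype.2 (hT v)
  le_ciInf fun w => h w w.2

lemma isSeminorm {U : Type*} [AddCommGroup U] [Module ℝ U] (p : Seminorm ℝ U) : IsSeminorm p :=
  ⟨fun t v => by rw [map_smul_eq_mul, Real.norm_eq_abs], map_add_le_add p⟩

end Seminorm

section Amalgam

open scoped NNReal

variable (E : Type*) [NormedAddCommGroup E] [NormedSpace ℝ E]

/-- `(u₀, u₁, t) ↦ u₀ + u₁ + t (x₀ - x₁)`, for `u₀ ∈ E ⊕ ℝx₀` and `u₁ ∈ E ⊕ ℝx₁`. -/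
def amalgamMap : (E × ℝ) × (E × ℝ) × ℝ →ₗ[ℝ] E × ℝ × ℝ where
  toFun w := (w.1.1 + w.2.1.1, w.1.2 + w.2.2, w.2.1.2 - w.2.2)
  map_add' w w' := by ext <;> simp only [Prod.fst_add, Prod.snd_add] <;> abel
  map_smul' c w := by ext <;> simp only [Prod.smul_fst, Prod.smul_snd, RingHom.id_apply] <;> module

variable {E}

lemma amalgamMap_surjective : Function.Surjective (amalgamMap E) :=
  fun v => ⟨((v.1, v.2.1), (0, v.2.2), 0), by simp [amalgamMap]⟩

lemma amalgamMap_eq_iff {w : (E × ℝ) × (E × ℝ) × ℝ} {a : E} {α β : ℝ} :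
    amalgamMap E w = (a, α, β) ↔ w.1 + w.2.1 = (a, α + β) ∧ w.2.1.2 - w.2.2 = β := by
  obtain ⟨⟨b₀, β₀⟩, ⟨b₁, β₁⟩, t⟩ := w
  simp only [amalgamMap, LinearMap.coe_mk, AddHom.coe_mk, Prod.mk_add_mk, Prod.mk.injEq]
  constructor
  · rintro ⟨hb, hα, hβ⟩
    exact ⟨⟨hb, by linarith⟩, hβ⟩
  · rintro ⟨⟨hb, hαβ⟩, hβ⟩
    exact ⟨hb, by linarith, hβ⟩

noncomputable def amalgam (p₀ p₁ : Seminorm ℝ (E × ℝ)) (r : ℝ≥0) : Seminorm ℝ (E × ℝ × ℝ) :=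
  (p₀.comp (LinearMap.fst ℝ _ _) + p₁.comp ((LinearMap.fst ℝ _ _).comp (LinearMap.snd ℝ _ _)) +
    r • (normSeminorm ℝ ℝ).comp ((LinearMap.snd ℝ _ _).comp (LinearMap.snd ℝ _ _))).map
    (amalgamMap E) amalgamMap_surjective

variable {p₀ p₁ : Seminorm ℝ (E × ℝ)} {r : ℝ≥0}

lemma amalgam_apply_le {v : E × ℝ × ℝ} {w : (E × ℝ) × (E × ℝ) × ℝ} (hw : amalgamMap E w = v) :
    amalgam p₀ p₁ r v ≤ p₀ w.1 + p₁ w.2.1 + r * |w.2.2| :=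
  Seminorm.map_apply_le hw

lemma le_amalgam_apply {v : E × ℝ × ℝ} {c : ℝ}
    (h : ∀ w, amalgamMap E w = v → c ≤ p₀ w.1 + p₁ w.2.1 + r * |w.2.2|) :
    c ≤ amalgam p₀ p₁ r v :=
  Seminorm.le_map_apply h

lemma amalgam_apply_left (h : ∀ v, p₀ v ≤ p₁ v + r * |v.2|) (a : E) (α : ℝ) :
    amalgam p₀ p₁ r (a, α, 0) = p₀ (a, α) := by
  refine le_antisymm ?_ (le_amalgam_apply ?_)
  · simpa using amalgam_apply_le (p₀ := p₀) (p₁ := p₁) (r := r) (w := ((a, α), 0, 0))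
      (by simp [amalgamMap])
  rintro ⟨u₀, u₁, t⟩ hw
  obtain ⟨hsum, ht⟩ := amalgamMap_eq_iff.1 hw
  obtain rfl : u₁.2 = t := by simpa [sub_eq_zero] using ht
  calc p₀ (a, α) = p₀ (u₀ + u₁) := by rw [hsum, add_zero]
    _ ≤ p₀ u₀ + p₀ u₁ := map_add_le_add p₀ u₀ u₁
    _ ≤ p₀ u₀ + p₁ u₁ + r * |u₁.2| := by linarith [h u₁]

lemma amalgam_apply_right (h : ∀ v, p₁ v ≤ p₀ v + r * |v.2|) (a : E) (α : ℝ) :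
    amalgam p₀ p₁ r (a, 0, α) = p₁ (a, α) := by
  refine le_antisymm ?_ (le_amalgam_apply ?_)
  · simpa using amalgam_apply_le (p₀ := p₀) (p₁ := p₁) (r := r) (w := (0, (a, α), 0))
      (by simp [amalgamMap])
  rintro ⟨u₀, u₁, t⟩ hw
  obtain ⟨hsum, ht⟩ := amalgamMap_eq_iff.1 hw
  obtain rfl : t = -u₀.2 := by
    have := congrArg Prod.snd hsum
    simp only [Prod.snd_add, zero_add] at this ht
    linarith
  calc p₁ (a, α) = p₁ (u₀ + u₁) := by rw [hsum, zero_add]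
    _ ≤ p₁ u₀ + p₁ u₁ := map_add_le_add p₁ u₀ u₁
    _ ≤ p₀ u₀ + p₁ u₁ + r * |-u₀.2| := by rw [abs_neg]; linarith [h u₀]

lemma amalgam_apply_one_neg_one (h : ∀ v, r * |v.2| ≤ p₀ v + p₁ v) :
    amalgam p₀ p₁ r (0, 1, -1) = r := by
  refine le_antisymm ?_ (le_amalgam_apply ?_)
  · simpa using amalgam_apply_le (p₀ := p₀) (p₁ := p₁) (r := r) (w := (0, 0, 1))
      (by simp [amalgamMap])
  rintro ⟨u₀, u₁, t⟩ hw
  obtain ⟨hsum, ht⟩ := amalgamMap_eq_iff.1 hw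
  obtain rfl : u₁ = -u₀ := by rw [eq_neg_iff_add_eq_zero, add_comm, hsum]; norm_num
  have hu₀t : u₀.2 + t = 1 := by simp only [Prod.snd_neg] at ht; linarith
  calc (r : ℝ) = r * |u₀.2 + t| := by rw [hu₀t, abs_one, mul_one]
    _ ≤ r * |u₀.2| + r * |t| := by rw [← mul_add]; gcongr; exact abs_add_le _ _
    _ ≤ p₀ u₀ + p₁ (-u₀) + r * |t| := by rw [map_neg_eq_map]; linarith [h u₀]

end Amalgam

/-- Given convex Katětov functions `ξ₀, ξ₁` on `E`, with `r₀ = sup |ξ₀ - ξ₁|` and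
`r₁ = inf (ξ₀ + ξ₁)`, we have `r₀ ≤ r₁`, and for every `r₀ ≤ r ≤ r₁` there is a seminorm
on `E ⊕ ℝx₀ ⊕ ℝx₁` (triples `(a, α₀, α₁)` encoding `α₀x₀ + α₁x₁ - a`) restricting to
`N^{ξ₀}` on `E ⊕ ℝx₀` and to `N^{ξ₁}` on `E ⊕ ℝx₁`, with `‖x₀ - x₁‖ = r`. -/
theorem convexKatetov_amalgamation {E : Type*} [NormedAddCommGroup E] [NormedSpace ℝ E]
    (ξ₀ ξ₁ : E → ℝ) (hK₀ : IsKatetov ξ₀) (hC₀ : ConvexOn ℝ Set.univ ξ₀)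
    (hK₁ : IsKatetov ξ₁) (hC₁ : ConvexOn ℝ Set.univ ξ₁)
    (r₀ r₁ : ℝ) (hr₀ : r₀ = ⨆ a : E, |ξ₀ a - ξ₁ a|) (hr₁ : r₁ = ⨅ a : E, (ξ₀ a + ξ₁ a)) :
    r₀ ≤ r₁ ∧
    ∀ r : ℝ, r₀ ≤ r → r ≤ r₁ →
      ∃ N : E × ℝ × ℝ → ℝ, IsSeminorm N ∧
        (∀ (a : E) (α : ℝ), N (a, α, 0) = katetovSeminorm ξ₀ (a, α)) ∧
        (∀ (a : E) (α : ℝ), N (a, 0, α) = katetovSeminorm ξ₁ (a, α)) ∧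
        N (0, 1, -1) = r := by
  subst hr₀ hr₁
  refine ⟨hK₀.iSup_abs_sub_le_iInf_add hK₁, fun r hr₀ hr₁ => ?_⟩
  have hdiff x : |ξ₀ x - ξ₁ x| ≤ r := (hK₀.abs_sub_le_iSup hK₁ x).trans hr₀
  have hsum x : r ≤ ξ₀ x + ξ₁ x := hr₁.trans (hK₀.iInf_add_le hK₁ x)
  have hr : (r.toNNReal : ℝ) = r := Real.coe_toNNReal r ((abs_nonneg _).trans (hdiff 0))
  let N := amalgam (convexKatetovSeminorm hK₀ hC₀) (convexKatetovSeminorm hK₁ hC₁) r.toNNReal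
  refine ⟨N, N.isSeminorm, amalgam_apply_left ?_, amalgam_apply_right ?_,
    amalgam_apply_one_neg_one ?_ |>.trans hr⟩
  · rw [hr]
    exact katetovSeminorm_le_add_mul_abs fun x => by linarith [abs_le.1 (hdiff x)]
  · rw [hr]
    exact katetovSeminorm_le_add_mul_abs fun x => by linarith [abs_le.1 (hdiff x)]
  · rw [hr]
    exact mul_abs_le_katetovSeminorm_add hsum
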